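/- Let S = { aᵢ − aⱼ : i, j ∈ {1,2,3} } ∪ { bᵢ − bⱼ : i, j ∈ {1,2,3} } and let ⟨S⟩ be the additive subgroup of G it generates. Then the number of connected components of the Tanner graph of QC(A,B) times the cardinality of ⟨S⟩ equals ℓ·m (i.e., the number of connected components is ℓm/|⟨S⟩|). -/

import Mathlib

/-- The four kinds of vertices in the Tanner graph of a bivariate bicycle code:
left data qubits, right data qubits, X-checks and Z-checks. -/
inductive Kind | L | R | X | Z
deriving DecidableEq

/-- Base adjacency relation of the Tanner graph of `QC(A,B)`: for every `g` and every
`i ∈ {1,2,3}`, `(X, g)` is adjacent to `(L, g + aᵢ)` and `(R, g + bᵢ)`, while `(Z, g)` is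
adjacent to `(L, g - bᵢ)` and `(R, g - aᵢ)`. -/
def tadj {G : Type*} [AddCommGroup G] (a b : Fin 3 → G) (u v : Kind × G) : Prop :=
  (∃ i, u.1 = Kind.X ∧ v.1 = Kind.L ∧ v.2 = u.2 + a i) ∨
  (∃ i, u.1 = Kind.X ∧ v.1 = Kind.R ∧ v.2 = u.2 + b i) ∨
  (∃ i, u.1 = Kind.Z ∧ v.1 = Kind.L ∧ v.2 = u.2 - b i) ∨
  (∃ i, u.1 = Kind.Z ∧ v.1 = Kind.R ∧ v.2 = u.2 - a i)

/-- The Tanner graph of the bivariate bicycle code `QC(A,B)` specified by exponent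
vectors `a₁,a₂,a₃` and `b₁,b₂,b₃`. -/
def tanner {G : Type*} [AddCommGroup G] (a b : Fin 3 → G) : SimpleGraph (Kind × G) where
  Adj u v := tadj a b u v ∨ tadj a b v u
  symm := ⟨fun _ _ h => h.symm⟩
  loopless := ⟨by
    rintro ⟨k, g⟩ h
    rcases h with h | h <;>
      rcases h with ⟨i, h1, h2, _⟩ | ⟨i, h1, h2, _⟩ | ⟨i, h1, h2, _⟩ | ⟨i, h1, h2, _⟩ <;>
      simp_all⟩

section Aux

variable {G : Type*} [AddCommGroup G] (a b : Fin 3 → G)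

/-- Offset associated to each vertex kind. -/
def cK : Kind → G
  | Kind.X => 0
  | Kind.L => -a 0
  | Kind.R => -b 0
  | Kind.Z => -a 0 - b 0

lemma tadj_shift (t : G) {u v : Kind × G} (h : tadj a b u v) :
    tadj a b (u.1, u.2 + t) (v.1, v.2 + t) := by
  obtain ⟨k₁, x⟩ := u; obtain ⟨k₂, y⟩ := v
  rcases h with ⟨i, h1, h2, h3⟩ | ⟨i, h1, h2, h3⟩ | ⟨i, h1, h2, h3⟩ | ⟨i, h1, h2, h3⟩
  · exact Or.inl ⟨i, h1, h2, by dsimp at h3 ⊢; rw [h3]; abel⟩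
  · exact Or.inr (Or.inl ⟨i, h1, h2, by dsimp at h3 ⊢; rw [h3]; abel⟩)
  · exact Or.inr (Or.inr (Or.inl ⟨i, h1, h2, by dsimp at h3 ⊢; rw [h3]; abel⟩))
  · exact Or.inr (Or.inr (Or.inr ⟨i, h1, h2, by dsimp at h3 ⊢; rw [h3]; abel⟩))

/-- Translation by `t` is a graph homomorphism of the Tanner graph. -/
def shiftHom (t : G) : tanner a b →g tanner a b where
  toFun p := (p.1, p.2 + t)
  map_rel' := by
    intro u v h
    rcases h with h | h
    · exact Or.inl (tadj_shift a b t h)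
    · exact Or.inr (tadj_shift a b t h)

lemma reach_shift (t : G) {u v : Kind × G} (h : (tanner a b).Reachable u v) :
    (tanner a b).Reachable (u.1, u.2 + t) (v.1, v.2 + t) :=
  h.map (shiftHom a b t)

lemma reach_X_shift (t : G) {x y : G}
    (h : (tanner a b).Reachable (Kind.X, x) (Kind.X, y)) :
    (tanner a b).Reachable (Kind.X, x + t) (Kind.X, y + t) :=
  reach_shift a b t h

/-- The set of `h` such that `(X, 0)` is reachable from `(X, h)`, as a subgroup. -/
def Treach : AddSubgroup G where
  carrier := {h | (tanner a b).Reachable (Kind.X, 0) (Kind.X, h)}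
  zero_mem' := SimpleGraph.Reachable.refl _
  add_mem' := by
    intro x y hx hy
    have := reach_X_shift a b y hx
    rw [zero_add] at this
    exact hy.trans this
  neg_mem' := by
    intro x hx
    have := reach_X_shift a b (-x) hx
    rw [zero_add, add_neg_cancel] at this
    exact this.symm

lemma a_sub_mem (i j : Fin 3) : a i - a j ∈ Treach a b := by
  have h1 : (tanner a b).Adj (Kind.X, (0 : G)) (Kind.L, a i) :=
    Or.inl (Or.inl ⟨i, rfl, rfl, (zero_add _).symm⟩)
  have h2 : (tanner a b).Adj (Kind.X, a i - a j) (Kind.L, a i) :=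
    Or.inl (Or.inl ⟨j, rfl, rfl, by dsimp; abel⟩)
  exact h1.reachable.trans h2.reachable.symm

lemma b_sub_mem (i j : Fin 3) : b i - b j ∈ Treach a b := by
  have h1 : (tanner a b).Adj (Kind.X, (0 : G)) (Kind.R, b i) :=
    Or.inl (Or.inr (Or.inl ⟨i, rfl, rfl, (zero_add _).symm⟩))
  have h2 : (tanner a b).Adj (Kind.X, b i - b j) (Kind.R, b i) :=
    Or.inl (Or.inr (Or.inl ⟨j, rfl, rfl, by dsimp; abel⟩))
  exact h1.reachable.trans h2.reachable.symm

lemma reach_to_X (k : Kind) (g : G) :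
    (tanner a b).Reachable (k, g) (Kind.X, g + cK a b k) := by
  cases k with
  | X => rw [cK, add_zero]
  | L =>
      refine SimpleGraph.Adj.reachable (Or.inr (Or.inl ⟨0, rfl, rfl, ?_⟩))
      dsimp [cK]; abel
  | R =>
      refine SimpleGraph.Adj.reachable (Or.inr (Or.inr (Or.inl ⟨0, rfl, rfl, ?_⟩)))
      dsimp [cK]; abel
  | Z =>
      have h1 : (tanner a b).Adj (Kind.Z, g) (Kind.L, g - b 0) :=
        Or.inl (Or.inr (Or.inr (Or.inl ⟨0, rfl, rfl, rfl⟩)))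
      have h2 : (tanner a b).Adj (Kind.L, g - b 0) (Kind.X, g + cK a b Kind.Z) := by
        refine Or.inr (Or.inl ⟨0, rfl, rfl, ?_⟩)
        dsimp [cK]; abel
      exact h1.reachable.trans h2.reachable

end Aux

theorem stmt5 (ℓ m : ℕ) (hℓ : 0 < ℓ) (hm : 0 < m)
    (a b : Fin 3 → ZMod ℓ × ZMod m)
    (ha : Function.Injective a) (hb : Function.Injective b) :
    Nat.card (tanner a b).ConnectedComponent *
      Nat.card ↥(AddSubgroup.closure
        ({g | ∃ i j, g = a i - a j} ∪ {g | ∃ i j, g = b i - b j} :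
          Set (ZMod ℓ × ZMod m))) = ℓ * m := by
  set S : Set (ZMod ℓ × ZMod m) :=
    {g | ∃ i j, g = a i - a j} ∪ {g | ∃ i j, g = b i - b j} with hS
  set H : AddSubgroup (ZMod ℓ × ZMod m) := AddSubgroup.closure S with hH
  have hHT : H ≤ Treach a b := by
    rw [hH, AddSubgroup.closure_le]
    rintro g (⟨i, j, rfl⟩ | ⟨i, j, rfl⟩)
    · exact a_sub_mem a b i j
    · exact b_sub_mem a b i j
  have hSmemA : ∀ i j : Fin 3, a i - a j ∈ H := fun i j =>
    AddSubgroup.subset_closure (Or.inl ⟨i, j, rfl⟩)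
  have hSmemB : ∀ i j : Fin 3, b i - b j ∈ H := fun i j =>
    AddSubgroup.subset_closure (Or.inr ⟨i, j, rfl⟩)
  let f : Kind × (ZMod ℓ × ZMod m) → (ZMod ℓ × ZMod m) ⧸ H :=
    fun p => QuotientAddGroup.mk (p.2 + cK a b p.1)
  have key : ∀ (k₁ k₂ : Kind) (x y : ZMod ℓ × ZMod m),
      -(x + cK a b k₁) + (y + cK a b k₂) ∈ H → f (k₁, x) = f (k₂, y) :=
    fun k₁ k₂ x y h => QuotientAddGroup.eq.mpr h
  have htadj : ∀ u v : Kind × (ZMod ℓ × ZMod m), tadj a b u v → f u = f v := by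
    rintro ⟨k₁, x⟩ ⟨k₂, y⟩
      (⟨i, h1, h2, h3⟩ | ⟨i, h1, h2, h3⟩ | ⟨i, h1, h2, h3⟩ | ⟨i, h1, h2, h3⟩) <;>
      dsimp at h1 h2 h3 <;> subst h1 <;> subst h2 <;> subst h3 <;> apply key
    · have : -(x + cK a b Kind.X) + (x + a i + cK a b Kind.L) = a i - a 0 := by
        dsimp [cK]; abel
      rw [this]; exact hSmemA i 0
    · have : -(x + cK a b Kind.X) + (x + b i + cK a b Kind.R) = b i - b 0 := by
        dsimp [cK]; abel
      rw [this]; exact hSmemB i 0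
    · have : -(x + cK a b Kind.Z) + (x - b i + cK a b Kind.L) = b 0 - b i := by
        dsimp [cK]; abel
      rw [this]; exact hSmemB 0 i
    · have : -(x + cK a b Kind.Z) + (x - a i + cK a b Kind.R) = a 0 - a i := by
        dsimp [cK]; abel
      rw [this]; exact hSmemA 0 i
  have hadj : ∀ u v : Kind × (ZMod ℓ × ZMod m), (tanner a b).Adj u v → f u = f v := by
    rintro u v (h | h)
    · exact htadj u v h
    · exact (htadj v u h).symm
  have hwalk : ∀ (u v : Kind × (ZMod ℓ × ZMod m)) (p : (tanner a b).Walk u v),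
      f u = f v := by
    intro u v p
    induction p with
    | nil => rfl
    | cons h p ih => exact (hadj _ _ h).trans ih
  have hreach : ∀ u v : Kind × (ZMod ℓ × ZMod m), f u = f v →
      (tanner a b).Reachable u v := by
    intro u v huv
    have huv' : -(u.2 + cK a b u.1) + (v.2 + cK a b v.1) ∈ H :=
      QuotientAddGroup.eq.mp huv
    have h1 : (tanner a b).Reachable (Kind.X, (0 : ZMod ℓ × ZMod m))
        (Kind.X, -(u.2 + cK a b u.1) + (v.2 + cK a b v.1)) := hHT huv'
    have h2 := reach_X_shift a b (u.2 + cK a b u.1) h1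
    rw [zero_add] at h2
    have heq : -(u.2 + cK a b u.1) + (v.2 + cK a b v.1) + (u.2 + cK a b u.1)
        = v.2 + cK a b v.1 := by abel
    rw [heq] at h2
    have hu := reach_to_X a b u.1 u.2
    have hv := reach_to_X a b v.1 v.2
    exact (hu.trans h2).trans hv.symm
  let F : (tanner a b).ConnectedComponent → (ZMod ℓ × ZMod m) ⧸ H :=
    SimpleGraph.ConnectedComponent.lift f (fun u v p _ => hwalk u v p)
  have hbij : Function.Bijective F := by
    constructor
    · intro c₁ c₂
      refine SimpleGraph.ConnectedComponent.ind₂ (fun u v h => ?_) c₁ c₂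
      exact SimpleGraph.ConnectedComponent.sound (hreach u v h)
    · intro q
      obtain ⟨g, rfl⟩ := QuotientAddGroup.mk_surjective q
      refine ⟨(tanner a b).connectedComponentMk (Kind.X, g), ?_⟩
      show f (Kind.X, g) = _
      show (QuotientAddGroup.mk (g + cK a b Kind.X) : _ ⧸ H) = _
      rw [show g + cK a b Kind.X = g from by dsimp [cK]; abel]
  have hcard : Nat.card (tanner a b).ConnectedComponent
      = Nat.card ((ZMod ℓ × ZMod m) ⧸ H) :=
    Nat.card_congr (Equiv.ofBijective F hbij)
  have hfull : Nat.card (ZMod ℓ × ZMod m)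
      = Nat.card ((ZMod ℓ × ZMod m) ⧸ H) * Nat.card H :=
    AddSubgroup.card_eq_card_quotient_mul_card_addSubgroup H
  have hG' : Nat.card (ZMod ℓ × ZMod m) = ℓ * m := by
    simp [Nat.card_prod, Nat.card_zmod]
  rw [hcard, ← hfull, hG']
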